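/- arXiv:2402.00642 — 2 statements merged into one kernel-verified Lean document; each statement's English description precedes it below -/
import Mathlib

section
/- Fix an integer m ≥ 1 and let λ = 1/2. For a positive integer n, let A be a subset chosen uniformly at random from F_{1/2,n}, let X̄ = C(|A|, m), and let σ̄² = E[X̄²] − (E[X̄])². Then for every ε > 0 there exists n₀ such that for all n ≥ n₀: σ̄² ≤ (1 + ε) · n^{2m−1} / (2^{2m} · ((m−1)!)²). -/
/-- `Fam n l` is the family `F_{λ,n}` of all subsets of `{1,…,n}` of size at most `λ·n`. -/
noncomputable def Fam (n : ℕ) (l : ℝ) : Finset (Finset (Fin n)) :=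
  Finset.univ.filter (fun A => (A.card : ℝ) ≤ l * n)

/-!
The variance is at most the mean squared deviation from any constant; take `C(⌊n/2⌋, m)`.
Every `A` in the family has `|A| ≤ ⌊n/2⌋`, and then
`0 ≤ C(⌊n/2⌋, m) - C(|A|, m) ≤ (n/2 - |A|) · C(⌊n/2⌋, m - 1) ≤ (n/2 - |A|) · (n/2)^(m-1) / (m-1)!`.
Complementation maps the family onto the sets of size at least `n/2`, so the family carries
half of `∑ (2|A| - n)² = n 2ⁿ` (the sum over all subsets) and at least half of all `2ⁿ` subsets.
Hence the variance is at most `(n/2)^(2m-2) / (m-1)!² · n/4`, for every `n`.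
-/

open Finset

lemma sum_sq_div_card_sub_sq_le {ι : Type*} (s : Finset ι) (f : ι → ℝ) (c : ℝ) :
    (∑ i ∈ s, f i ^ 2) / #s - ((∑ i ∈ s, f i) / #s) ^ 2 ≤ (∑ i ∈ s, (f i - c) ^ 2) / #s := by
  rcases s.eq_empty_or_nonempty with rfl | hs
  · simp
  have hN : (#s : ℝ) ≠ 0 := by exact_mod_cast hs.card_pos.ne'
  have hexpand : ∑ i ∈ s, (f i - c) ^ 2 = ∑ i ∈ s, f i ^ 2 - 2 * c * ∑ i ∈ s, f i + #s * c ^ 2 := by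
    simp only [sub_sq, sum_add_distrib, sum_sub_distrib, mul_sum, sum_const, nsmul_eq_mul]
    simp only [mul_assoc, mul_comm c]
  have hgap : (∑ i ∈ s, (f i - c) ^ 2) / #s - ((∑ i ∈ s, f i ^ 2) / #s - ((∑ i ∈ s, f i) / #s) ^ 2)
      = ((∑ i ∈ s, f i) / #s - c) ^ 2 := by
    rw [hexpand]; field_simp; ring
  linarith [sq_nonneg ((∑ i ∈ s, f i) / #s - c)]

lemma sum_powerset_two_mul_card_sub_sq {α : Type*} [DecidableEq α] (s : Finset α) :
    ∑ A ∈ s.powerset, (2 * (#A : ℝ) - #s) ^ 2 = (#s : ℝ) * 2 ^ #s := by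
  induction s using Finset.induction_on with
  | empty => simp
  | insert a s ha ih =>
    have hcard : ∀ A ∈ s.powerset, #(insert a A) = #A + 1 := fun A hA =>
      card_insert_of_notMem fun h => ha (mem_powerset.1 hA h)
    rw [sum_powerset_insert ha, card_insert_of_notMem ha, ← sum_add_distrib]
    -- `(x - 1)² + (x + 1)² = 2x² + 2` with `x = 2|A| - |s|`
    calc _ = ∑ A ∈ s.powerset, (2 * (2 * (#A : ℝ) - #s) ^ 2 + 2) := by
          refine sum_congr rfl fun A hA => ?_; rw [hcard A hA]; push_cast; ring
      _ = ↑(#s + 1) * 2 ^ (#s + 1) := by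
          rw [sum_add_distrib, ← mul_sum, ih, sum_const, card_powerset]; push_cast; ring

lemma two_mul_sum_filter_two_mul_card_le {α : Type*} [Fintype α] [DecidableEq α] (f : Finset α → ℝ) (hf : ∀ A, f Aᶜ = f A) :
    2 * ∑ A with 2 * #A ≤ Fintype.card α, f A
      = ∑ A, f A + ∑ A with 2 * #A = Fintype.card α, f A := by
  have hsymm : ∑ A with 2 * #A ≤ Fintype.card α, f A
      = ∑ A with Fintype.card α ≤ 2 * #A, f A := by
    refine sum_nbij' compl compl (fun A hA => ?_) (fun A hA => ?_) (fun A _ => compl_compl A)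
      (fun A _ => compl_compl A) (fun A _ => (hf A).symm) <;>
    · simp only [mem_filter, mem_univ, true_and, card_compl] at hA ⊢
      have := card_le_univ A
      omega
  rw [two_mul]
  nth_rewrite 2 [hsymm]
  rw [sum_filter, sum_filter, sum_filter, ← sum_add_distrib, ← sum_add_distrib]
  refine sum_congr rfl fun A _ => ?_
  split_ifs <;> first | ring1 | (exfalso; omega)

lemma Fam_half_eq (n : ℕ) : Fam n (1 / 2) = univ.filter fun A => 2 * #A ≤ n := by
  refine filter_congr fun A _ => ?_
  rw [← Nat.cast_le (α := ℝ)]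
  push_cast
  constructor <;> intro h <;> linarith

lemma two_pow_le_two_mul_card_Fam_half (n : ℕ) : (2 : ℝ) ^ n ≤ 2 * #(Fam n (1 / 2)) := by
  have h := two_mul_sum_filter_two_mul_card_le (α := Fin n) (fun _ => 1) fun _ => rfl
  simp only [sum_const, nsmul_one, card_univ, Fintype.card_finset, Fintype.card_fin] at h
  rw [Fam_half_eq]
  push_cast at h
  linarith [(Nat.cast_nonneg _ : (0 : ℝ) ≤ #(univ.filter fun A : Finset (Fin n) => 2 * #A = n))]

lemma sum_Fam_half_two_mul_card_sub_sq (n : ℕ) :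
    ∑ A ∈ Fam n (1 / 2), (2 * (#A : ℝ) - n) ^ 2 = (n : ℝ) * 2 ^ n / 2 := by
  have hcompl (A : Finset (Fin n)) : (2 * (#Aᶜ : ℝ) - n) ^ 2 = (2 * (#A : ℝ) - n) ^ 2 := by
    have hA := card_le_univ A
    rw [Fintype.card_fin] at hA
    rw [card_compl, Fintype.card_fin, Nat.cast_sub hA]
    ring
  have hall := sum_powerset_two_mul_card_sub_sq (univ : Finset (Fin n))
  have hmid : ∑ A : Finset (Fin n) with 2 * #A = n, (2 * (#A : ℝ) - n) ^ 2 = 0 :=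
    sum_eq_zero fun A hA => by
      have h : ((2 * #A : ℕ) : ℝ) = n := congrArg Nat.cast (mem_filter.1 hA).2
      push_cast at h
      simp [h]
  have h := two_mul_sum_filter_two_mul_card_le (fun A => (2 * (#A : ℝ) - n) ^ 2) hcompl
  rw [powerset_univ, card_univ, Fintype.card_fin] at hall
  rw [Fintype.card_fin, hall, hmid] at h
  rw [Fam_half_eq]
  linarith

lemma choose_succ_sub_choose_succ_le (m : ℕ) {a b : ℕ} (hab : a ≤ b) :
    (b.choose (m + 1) : ℝ) - a.choose (m + 1) ≤ ((b : ℝ) - a) * b.choose m := by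
  induction b, hab using Nat.le_induction with
  | base => simp
  | succ b hab ih =>
    have hmono : (b.choose m : ℝ) ≤ (b + 1).choose m := by
      exact_mod_cast Nat.choose_le_choose m b.le_succ
    have hba : (a : ℝ) ≤ b := by exact_mod_cast hab
    rw [Nat.choose_succ_succ, Nat.cast_add]
    push_cast
    nlinarith

lemma choose_sub_choose_half_sq_le (m : ℕ) {n k : ℕ} (hk : 2 * k ≤ n) :
    ((k.choose (m + 1) : ℝ) - (n / 2).choose (m + 1)) ^ 2
      ≤ ((n : ℝ) / 2 - k) ^ 2 * (((n : ℝ) / 2) ^ m / m.factorial) ^ 2 := by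
  have hkK : k ≤ n / 2 := by omega
  have hK : ((n / 2 : ℕ) : ℝ) ≤ n / 2 := Nat.cast_div_le.trans_eq (by norm_num)
  have hmono : (k.choose (m + 1) : ℝ) ≤ (n / 2).choose (m + 1) := by
    exact_mod_cast Nat.choose_le_choose _ hkK
  have hk' : (k : ℝ) ≤ (n / 2 : ℕ) := by exact_mod_cast hkK
  have hchoose : ((n / 2).choose m : ℝ) ≤ ((n : ℝ) / 2) ^ m / m.factorial :=
    (Nat.choose_le_pow_div m _).trans (by gcongr)
  have hgap := choose_succ_sub_choose_succ_le m hkK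
  rw [← mul_pow, ← neg_sub, neg_sq]
  gcongr
  calc _ ≤ _ := hgap
    _ ≤ _ := by gcongr; linarith

lemma variance_choose_Fam_half_le (n m : ℕ) :
    (∑ A ∈ Fam n (1 / 2), ((#A).choose (m + 1) : ℝ) ^ 2) / #(Fam n (1 / 2)) -
        ((∑ A ∈ Fam n (1 / 2), ((#A).choose (m + 1) : ℝ)) / #(Fam n (1 / 2))) ^ 2
      ≤ (n : ℝ) ^ (2 * m + 1) / (2 ^ (2 * m + 2) * (m.factorial : ℝ) ^ 2) := by
  set F := Fam n (1 / 2) with hFdef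
  set B : ℝ := ((n : ℝ) / 2) ^ m / m.factorial with hB
  have hdev : ∑ A ∈ F, (((#A).choose (m + 1) : ℝ) - (n / 2).choose (m + 1)) ^ 2
      ≤ B ^ 2 / 4 * ((n : ℝ) * 2 ^ n / 2) := by
    rw [← sum_Fam_half_two_mul_card_sub_sq, mul_sum]
    refine sum_le_sum fun A hA => ?_
    have hA : 2 * #A ≤ n := by rw [hFdef, Fam_half_eq] at hA; exact (mem_filter.1 hA).2
    calc _ ≤ _ := choose_sub_choose_half_sq_le m hA
      _ = _ := by ring
  have hF : (2 : ℝ) ^ n / 2 ≤ #F := by linarith [two_pow_le_two_mul_card_Fam_half n]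
  calc _ ≤ (∑ A ∈ F, (((#A).choose (m + 1) : ℝ) - (n / 2).choose (m + 1)) ^ 2) / #F :=
        sum_sq_div_card_sub_sq_le _ _ _
    _ ≤ B ^ 2 / 4 * ((n : ℝ) * 2 ^ n / 2) / (2 ^ n / 2) := by gcongr
    _ = _ := by
      rw [hB, div_pow, div_pow]
      field_simp
      ring

theorem stmt5 (m : ℕ) (hm : 1 ≤ m) (ε : ℝ) (hε : 0 < ε) :
    ∃ n₀ : ℕ, ∀ n : ℕ, n₀ ≤ n → 0 < n →
      (∑ A ∈ Fam n (1 / 2), ((A.card.choose m : ℝ)) ^ 2) / ((Fam n (1 / 2)).card : ℝ) -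
        ((∑ A ∈ Fam n (1 / 2), ((A.card.choose m : ℝ))) / ((Fam n (1 / 2)).card : ℝ)) ^ 2 ≤
      (1 + ε) * (n : ℝ) ^ (2 * m - 1) / (2 ^ (2 * m) * (((m - 1).factorial : ℝ)) ^ 2) := by
  obtain ⟨m, rfl⟩ : ∃ k, m = k + 1 := ⟨m - 1, by omega⟩
  refine ⟨0, fun n _ _ => (variance_choose_Fam_half_le n m).trans ?_⟩
  rw [show 2 * (m + 1) - 1 = 2 * m + 1 by omega, Nat.add_sub_cancel, mul_div_assoc]
  exact le_mul_of_one_le_left (by positivity) (by linarith)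
end

section
/- Fix integers k, m ≥ 1, a real λ with 1/2 < λ ≤ 1, and ε > 0. There exists n₀ such that for all n ≥ n₀ the following holds: let Σ = (a_1, …, a_n) be a sequence in ℤ^k with every entry in [0, M]^k such that e^m_Σ(A₁) ≠ e^m_Σ(A₂) for all distinct A₁, A₂ ∈ F_{λ,n} with |A₁|, |A₂| ≥ m. Let A be uniform on F_{λ,n}, X = e^m_Σ(A) ∈ ℤ^k, μ = E[X], and σ² = E[‖X − μ‖²]. Then σ² ≤ (1 + ε) · k(2m²λ^{2m−1} + 2m²λ^{2m} + 1) · n^{2m−1} · M^{2m} / (m!)². -/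
/-- The `m`-th evaluation of the sequence `a` in `ℤ^k` on the subset `A`
(componentwise products); it is `0` when `|A| < m`. -/
def mthEvalVec (n k m : ℕ) (a : Fin n → Fin k → ℤ) (A : Finset (Fin n)) : Fin k → ℤ :=
  fun j => ∑ S ∈ A.powersetCard m, ∏ i ∈ S, a i j

open Finset Nat

theorem Nat.choose_mul_choose_sq_mul_factorial_sq_le {n m j : ℕ} (hjm : j ≤ m) :
    n.choose j * (n - j).choose (m - j) ^ 2 * m ! ^ 2 ≤ n ^ (2 * m - j) * m ^ (2 * j) := by
  have h : (n - j).choose (m - j) * m ! ≤ n ^ (m - j) * m ^ j :=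
    calc (n - j).choose (m - j) * m !
        = (n - j).descFactorial (m - j) * m.descFactorial j := by
          rw [← factorial_mul_descFactorial hjm, descFactorial_eq_factorial_mul_choose (n - j)]; ring
      _ ≤ n ^ (m - j) * m ^ j := Nat.mul_le_mul
          ((descFactorial_le_pow _ _).trans (Nat.pow_le_pow_left (n.sub_le j) _))
          (descFactorial_le_pow _ _)
  calc n.choose j * (n - j).choose (m - j) ^ 2 * m ! ^ 2
      = n.choose j * ((n - j).choose (m - j) * m !) ^ 2 := by ring
    _ ≤ n ^ j * (n ^ (m - j) * m ^ j) ^ 2 := by gcongr; exact choose_le_pow n j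
    _ = n ^ (2 * m - j) * m ^ (2 * j) := by
        rw [mul_pow, ← pow_mul, ← pow_mul, ← mul_assoc, ← pow_add]
        congr 2 <;> omega

theorem Nat.pow_mul_pow_mul_two_pow_le {n m j : ℕ} (hj : j < m) (hn : 2 * m ^ 2 ≤ n) :
    n ^ (2 * m - (j + 1)) * m ^ (2 * (j + 1)) * 2 ^ j ≤ m ^ 2 * n ^ (2 * m - 1) :=
  calc n ^ (2 * m - (j + 1)) * m ^ (2 * (j + 1)) * 2 ^ j
      = m ^ 2 * (n ^ (2 * m - (j + 1)) * (2 * m ^ 2) ^ j) := by ring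
    _ ≤ m ^ 2 * (n ^ (2 * m - (j + 1)) * n ^ j) := by gcongr
    _ = m ^ 2 * n ^ (2 * m - 1) := by rw [← pow_add]; congr 2; omega

namespace Finset

variable {ι : Type*} (s : Finset ι) (f : ι → ℝ)

theorem sum_sq_sub_eq_sum_sq_sub_mean_add (c : ℝ) :
    ∑ x ∈ s, (f x - c) ^ 2 =
      ∑ x ∈ s, (f x - (∑ y ∈ s, f y) / #s) ^ 2 + #s * ((∑ y ∈ s, f y) / #s - c) ^ 2 := by
  set μ := (∑ y ∈ s, f y) / #s
  have hμ : ∑ x ∈ s, (f x - μ) = 0 := by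
    rcases s.eq_empty_or_nonempty with rfl | hs
    · simp
    · rw [sum_sub_distrib, sum_const, nsmul_eq_mul, mul_div_cancel₀ _ (by simp [hs.ne_empty])]
      ring
  calc ∑ x ∈ s, (f x - c) ^ 2
      = ∑ x ∈ s, ((f x - μ) ^ 2 + 2 * (μ - c) * (f x - μ) + (μ - c) ^ 2) :=
        sum_congr rfl fun _ _ => by ring
    _ = _ := by
        rw [sum_add_distrib, sum_add_distrib, ← mul_sum, hμ, sum_const, nsmul_eq_mul]
        ring

theorem sum_sq_sub_mean_le (c : ℝ) :
    ∑ x ∈ s, (f x - (∑ y ∈ s, f y) / #s) ^ 2 ≤ ∑ x ∈ s, (f x - c) ^ 2 := by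
  rw [sum_sq_sub_eq_sum_sq_sub_mean_add s f c]
  exact le_add_of_nonneg_right (by positivity)

theorem sum_sq_sub_mean_eq :
    ∑ x ∈ s, (f x - (∑ y ∈ s, f y) / #s) ^ 2 = ∑ x ∈ s, f x ^ 2 - (∑ y ∈ s, f y) ^ 2 / #s := by
  have h := sum_sq_sub_eq_sum_sq_sub_mean_add s f 0
  simp only [sub_zero] at h
  rw [h, add_sub_assoc, left_eq_add, sub_eq_zero]
  rcases eq_or_ne (#s : ℝ) 0 with hs | hs
  · simp [hs]
  · field_simp

section Cube

variable {α : Type*} [Fintype α] (m : ℕ)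

theorem sum_nonempty_eq_sum_range_sum_powersetCard (g : Finset α → ℝ)
    (hm : m ≤ Fintype.card α) (hg : ∀ R : Finset α, m < #R → g R = 0) :
    ∑ R ∈ univ with R.Nonempty, g R = ∑ j ∈ range m, ∑ R ∈ powersetCard (j + 1) univ, g R := by
  rw [sum_filter, ← powerset_univ, sum_powerset, card_univ, sum_range_succ']
  simp only [powersetCard_zero, sum_singleton, not_nonempty_empty, if_false, add_zero]
  rw [← sum_subset (range_subset_range.2 hm)]
  · refine sum_congr rfl fun j _ => sum_congr rfl fun R hR => if_pos ?_
    rw [← card_pos, (mem_powersetCard.1 hR).2]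
    exact j.succ_pos
  · intro j _ hj
    refine sum_eq_zero fun R hR => ?_
    rw [hg R (by rw [(mem_powersetCard.1 hR).2]; rw [mem_range, not_lt] at hj; omega), ite_self]

variable [DecidableEq α]

theorem card_supersets (S : Finset α) :
    (#{A : Finset α | S ⊆ A} : ℝ) = 2 ^ Fintype.card α / 2 ^ #S := by
  have : ({A : Finset α | S ⊆ A} : Finset (Finset α)) = Icc S univ := by ext; simp
  rw [this, card_Icc_finset (subset_univ S), card_univ, Nat.cast_pow, Nat.cast_ofNat,
    pow_sub₀ _ two_ne_zero (card_le_univ S), div_eq_mul_inv]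

variable (w : Finset α → ℝ)

theorem sum_powersetCard_eq_sum_ite (A : Finset α) :
    ∑ S ∈ A.powersetCard m, w S = ∑ S ∈ powersetCard m univ, if S ⊆ A then w S else 0 := by
  rw [← sum_filter]
  congr 1
  ext S
  simp [and_comm]

theorem sum_sum_powersetCard :
    ∑ A : Finset α, ∑ S ∈ A.powersetCard m, w S =
      2 ^ Fintype.card α / 2 ^ m * ∑ S ∈ powersetCard m univ, w S := by
  rw [sum_congr rfl fun A _ => sum_powersetCard_eq_sum_ite m w A, sum_comm, mul_sum]
  refine sum_congr rfl fun S hS => ?_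
  rw [← sum_filter, sum_const, nsmul_eq_mul, card_supersets, (mem_powersetCard.1 hS).2]

theorem sum_sq_sum_powersetCard :
    ∑ A : Finset α, (∑ S ∈ A.powersetCard m, w S) ^ 2 = 2 ^ Fintype.card α / 4 ^ m *
      ∑ S ∈ powersetCard m univ, ∑ T ∈ powersetCard m univ, w S * w T * 2 ^ #(S ∩ T) := by
  rw [sum_congr rfl fun A _ => congrArg (· ^ 2) (sum_powersetCard_eq_sum_ite m w A)]
  simp_rw [sq, sum_mul_sum, ite_zero_mul_ite_zero, ← union_subset_iff]
  rw [sum_comm, mul_sum]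
  refine sum_congr rfl fun S hS => ?_
  rw [sum_comm, mul_sum]
  refine sum_congr rfl fun T hT => ?_
  have hST : (2 : ℝ) ^ #(S ∪ T) * 2 ^ #(S ∩ T) = 4 ^ m := by
    rw [← pow_add, card_union_add_card_inter, (mem_powersetCard.1 hS).2,
      (mem_powersetCard.1 hT).2, ← two_mul, pow_mul]
    norm_num
  rw [← sum_filter, sum_const, nsmul_eq_mul, card_supersets, ← hST]
  field_simp

theorem sum_nonempty_sq_sum_supersets :
    ∑ R ∈ univ with R.Nonempty, (∑ S ∈ powersetCard m univ with R ⊆ S, w S) ^ 2 =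
      ∑ S ∈ powersetCard m univ, ∑ T ∈ powersetCard m univ, w S * w T * (2 ^ #(S ∩ T) - 1) := by
  simp_rw [sq, sum_filter, sum_mul_sum, ite_zero_mul_ite_zero, ← subset_inter_iff]
  rw [← sum_filter, sum_comm]
  refine sum_congr rfl fun S _ => ?_
  rw [sum_comm]
  refine sum_congr rfl fun T _ => ?_
  have hcount : {R ∈ (univ : Finset (Finset α)) | R.Nonempty ∧ R ⊆ S ∩ T} = Ioc ∅ (S ∩ T) := by
    ext R
    simp [Finset.nonempty_iff_ne_empty, Finset.empty_ssubset]
  rw [← sum_filter, sum_const, nsmul_eq_mul, filter_filter, hcount, card_Ioc_finset (empty_subset _)]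
  push_cast [Nat.one_le_two_pow]
  rw [card_empty, Nat.sub_zero]
  ring

theorem sum_sq_sub_mean_sum_powersetCard :
    ∑ A : Finset α, (∑ S ∈ A.powersetCard m, w S -
        (∑ B : Finset α, ∑ S ∈ B.powersetCard m, w S) / 2 ^ Fintype.card α) ^ 2 =
      2 ^ Fintype.card α / 4 ^ m *
        ∑ R ∈ univ with R.Nonempty, (∑ S ∈ powersetCard m univ with R ⊆ S, w S) ^ 2 := by
  have h := sum_sq_sub_mean_eq univ fun A : Finset α => ∑ S ∈ A.powersetCard m, w S
  rw [card_univ, Fintype.card_finset, Nat.cast_pow, Nat.cast_ofNat] at h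
  rw [h, sum_sq_sum_powersetCard, sum_sum_powersetCard, sum_nonempty_sq_sum_supersets]
  simp only [mul_sub, mul_one, sum_sub_distrib, mul_sum]
  rw [sub_right_inj, sq, sum_mul_sum, sum_div]
  refine sum_congr rfl fun S _ => ?_
  rw [sum_div]
  refine sum_congr rfl fun T _ => ?_
  rw [show (4 : ℝ) ^ m = 2 ^ m * 2 ^ m by rw [← mul_pow]; norm_num]
  field_simp

theorem sum_supersets_le (K : ℝ) (hw : ∀ S ∈ powersetCard m univ, 0 ≤ w S ∧ w S ≤ K)
    {R : Finset α} (hR : #R ≤ m) :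
    ∑ S ∈ powersetCard m univ with R ⊆ S, w S ≤ K * (Fintype.card α - #R).choose (m - #R) := by
  calc ∑ S ∈ powersetCard m univ with R ⊆ S, w S
      ≤ #{S ∈ powersetCard m univ | R ⊆ S} • K :=
        sum_le_card_nsmul _ _ _ fun S hS => (hw S (mem_filter.1 hS).1).2
    _ = K * (Fintype.card α - #R).choose (m - #R) := by
        rw [card_filter_powersetCard_subset R univ m (subset_univ R) hR, card_univ, nsmul_eq_mul,
          mul_comm]

theorem sum_powersetCard_sq_sum_supersets_le (K : ℝ)
    (hw : ∀ S ∈ powersetCard m univ, 0 ≤ w S ∧ w S ≤ K) {j : ℕ} (hjm : j ≤ m) :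
    ∑ R ∈ powersetCard j univ, (∑ S ∈ powersetCard m univ with R ⊆ S, w S) ^ 2 ≤
      (Fintype.card α).choose j * (K * (Fintype.card α - j).choose (m - j)) ^ 2 := by
  rw [← card_univ, ← card_powersetCard, ← nsmul_eq_mul, card_univ]
  refine sum_le_card_nsmul _ _ _ fun R hR => ?_
  have hR : #R = j := (mem_powersetCard.1 hR).2
  have hle := sum_supersets_le m w K hw (hR ▸ hjm)
  rw [hR] at hle
  exact pow_le_pow_left₀ (sum_nonneg fun S hS => (hw S (mem_filter.1 hS).1).1) hle 2

theorem sum_nonempty_sq_sum_supersets_le (K : ℝ)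
    (hw : ∀ S ∈ powersetCard m univ, 0 ≤ w S ∧ w S ≤ K) (hn : 2 * m ^ 2 ≤ Fintype.card α) :
    ∑ R ∈ univ with R.Nonempty, (∑ S ∈ powersetCard m univ with R ⊆ S, w S) ^ 2 ≤
      2 * m ^ 2 * (Fintype.card α : ℝ) ^ (2 * m - 1) * K ^ 2 / (m ! : ℝ) ^ 2 := by
  set n := Fintype.card α
  set C : ℝ := m ^ 2 * (n : ℝ) ^ (2 * m - 1) * K ^ 2 / (m ! : ℝ) ^ 2 with hC
  have hG_large : ∀ R : Finset α, m < #R →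
      (∑ S ∈ powersetCard m univ with R ⊆ S, w S) ^ 2 = 0 := by
    intro R hR
    rw [filter_false_of_mem fun S hS hRS => (card_le_card hRS).not_gt
      ((mem_powersetCard.1 hS).2 ▸ hR), sum_empty, zero_pow two_ne_zero]
  have hlevel : ∀ j ∈ range m, ∑ R ∈ powersetCard (j + 1) univ,
      (∑ S ∈ powersetCard m univ with R ⊆ S, w S) ^ 2 ≤ C * (1 / 2) ^ j := by
    intro j hj
    have hjm : j < m := mem_range.1 hj
    have hnat : n.choose (j + 1) * (n - (j + 1)).choose (m - (j + 1)) ^ 2 * (m ! ^ 2 * 2 ^ j) ≤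
        m ^ 2 * n ^ (2 * m - 1) := by
      rw [← mul_assoc]
      exact (Nat.mul_le_mul_right _ (choose_mul_choose_sq_mul_factorial_sq_le hjm)).trans
        (pow_mul_pow_mul_two_pow_le hjm hn)
    have hreal : (n.choose (j + 1) : ℝ) * ((n - (j + 1)).choose (m - (j + 1)) : ℝ) ^ 2 ≤
        m ^ 2 * (n : ℝ) ^ (2 * m - 1) / ((m ! : ℝ) ^ 2 * 2 ^ j) := by
      rw [le_div_iff₀ (by positivity)]
      exact_mod_cast hnat
    calc _ ≤ (n.choose (j + 1) : ℝ) * (K * (n - (j + 1)).choose (m - (j + 1))) ^ 2 :=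
          sum_powersetCard_sq_sum_supersets_le m w K hw hjm
      _ = K ^ 2 * ((n.choose (j + 1) : ℝ) * ((n - (j + 1)).choose (m - (j + 1)) : ℝ) ^ 2) := by
          ring
      _ ≤ K ^ 2 * (m ^ 2 * (n : ℝ) ^ (2 * m - 1) / ((m ! : ℝ) ^ 2 * 2 ^ j)) := by gcongr
      _ = C * (1 / 2) ^ j := by rw [hC, one_div_pow]; field_simp
  calc _ = ∑ j ∈ range m, ∑ R ∈ powersetCard (j + 1) univ,
        (∑ S ∈ powersetCard m univ with R ⊆ S, w S) ^ 2 :=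
        sum_nonempty_eq_sum_range_sum_powersetCard m _ (by nlinarith) hG_large
    _ ≤ ∑ j ∈ range m, C * (1 / 2) ^ j := sum_le_sum hlevel
    _ ≤ C * 2 := by
        rw [← mul_sum]
        gcongr
        exact sum_geometric_two_le m
    _ = _ := by ring

theorem sum_sq_sub_mean_sum_powersetCard_prod_le (b : α → ℝ) (M : ℝ)
    (hb : ∀ i, 0 ≤ b i ∧ b i ≤ M) (hn : 2 * m ^ 2 ≤ Fintype.card α) :
    ∑ A : Finset α, (∑ S ∈ A.powersetCard m, ∏ i ∈ S, b i -
        (∑ B : Finset α, ∑ S ∈ B.powersetCard m, ∏ i ∈ S, b i) / 2 ^ Fintype.card α) ^ 2 ≤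
      2 ^ Fintype.card α / 4 ^ m *
        (2 * m ^ 2 * (Fintype.card α : ℝ) ^ (2 * m - 1) * M ^ (2 * m) / (m ! : ℝ) ^ 2) := by
  have hprod : ∀ S ∈ powersetCard m univ, 0 ≤ ∏ i ∈ S, b i ∧ ∏ i ∈ S, b i ≤ M ^ m := by
    intro S hS
    refine ⟨prod_nonneg fun i _ => (hb i).1, ?_⟩
    calc ∏ i ∈ S, b i ≤ ∏ _i ∈ S, M := prod_le_prod (fun i _ => (hb i).1) fun i _ => (hb i).2
      _ = M ^ m := by rw [prod_const, (mem_powersetCard.1 hS).2]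
  rw [sum_sq_sub_mean_sum_powersetCard, pow_mul']
  gcongr
  exact sum_nonempty_sq_sum_supersets_le m _ _ hprod hn

end Cube

end Finset

theorem two_pow_le_two_mul_card_Fam {n : ℕ} {l : ℝ} (hl : 1 / 2 ≤ l) :
    2 ^ n ≤ 2 * #(Fam n l) := by
  have hcover : (univ : Finset (Finset (Fin n))) ⊆ Fam n l ∪ (Fam n l).image compl := by
    intro A _
    by_cases hA : A ∈ Fam n l
    · exact mem_union_left _ hA
    · refine mem_union_right _ (mem_image.2 ⟨Aᶜ, ?_, compl_compl A⟩)
      simp only [Fam, mem_filter, mem_univ, true_and, not_le] at hA ⊢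
      rw [card_compl, Fintype.card_fin, Nat.cast_sub (by simpa using card_le_univ A)]
      nlinarith [mul_le_mul_of_nonneg_right hl (Nat.cast_nonneg (α := ℝ) n)]
  calc 2 ^ n = #(univ : Finset (Finset (Fin n))) := by simp
    _ ≤ #(Fam n l) + #((Fam n l).image compl) := (card_le_card hcover).trans (card_union_le _ _)
    _ ≤ 2 * #(Fam n l) := by linarith [card_image_le (s := Fam n l) (f := compl)]

theorem cast_mthEvalVec {n k m : ℕ} (a : Fin n → Fin k → ℤ) (A : Finset (Fin n)) (j : Fin k) :
    (mthEvalVec n k m a A j : ℝ) = ∑ S ∈ A.powersetCard m, ∏ i ∈ S, (a i j : ℝ) := by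
  push_cast [mthEvalVec]
  rfl

theorem sum_sq_sub_mean_mthEvalVec_le {n k m : ℕ} {M : ℤ} {a : Fin n → Fin k → ℤ}
    (ha : ∀ i j, 0 ≤ a i j ∧ a i j ≤ M) (hn : 2 * m ^ 2 ≤ n) (𝒜 : Finset (Finset (Fin n)))
    (j : Fin k) :
    ∑ A ∈ 𝒜, ((mthEvalVec n k m a A j : ℝ) - (∑ B ∈ 𝒜, (mthEvalVec n k m a B j : ℝ)) / #𝒜) ^ 2 ≤
      2 ^ n / 4 ^ m * (2 * m ^ 2 * (n : ℝ) ^ (2 * m - 1) * (M : ℝ) ^ (2 * m) / (m ! : ℝ) ^ 2) := by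
  set f : Finset (Fin n) → ℝ := fun A => mthEvalVec n k m a A j
  have hcube := sum_sq_sub_mean_sum_powersetCard_prod_le m (fun i => (a i j : ℝ)) M
    (fun i => ⟨by exact_mod_cast (ha i j).1, by exact_mod_cast (ha i j).2⟩)
    (by rwa [Fintype.card_fin])
  simp only [← cast_mthEvalVec, Fintype.card_fin] at hcube
  calc ∑ A ∈ 𝒜, (f A - (∑ B ∈ 𝒜, f B) / #𝒜) ^ 2
      ≤ ∑ A ∈ 𝒜, (f A - (∑ B, f B) / 2 ^ n) ^ 2 := sum_sq_sub_mean_le 𝒜 f _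
    _ ≤ ∑ A, (f A - (∑ B, f B) / 2 ^ n) ^ 2 :=
        sum_le_sum_of_subset_of_nonneg (subset_univ 𝒜) fun _ _ _ => sq_nonneg _
    _ ≤ _ := hcube

theorem four_mul_sq_div_four_pow_le {m : ℕ} (hm : 1 ≤ m) {l ε : ℝ} (hl : 1 / 2 ≤ l)
    (hε : 0 ≤ ε) :
    4 * (m : ℝ) ^ 2 / 4 ^ m ≤
      (1 + ε) * (2 * (m : ℝ) ^ 2 * l ^ (2 * m - 1) + 2 * (m : ℝ) ^ 2 * l ^ (2 * m) + 1) := by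
  have hhalf : (1 / 2 : ℝ) ^ (2 * m - 1) = 2 / 4 ^ m := by
    rw [one_div_pow, show (4 : ℝ) ^ m = 2 ^ (2 * m - 1) * 2 by
      rw [← pow_succ, Nat.sub_add_cancel (by omega), pow_mul]; norm_num]
    field_simp
  have hl₀ : 0 ≤ l := by linarith
  calc 4 * (m : ℝ) ^ 2 / 4 ^ m = 2 * m ^ 2 * (1 / 2) ^ (2 * m - 1) := by rw [hhalf]; ring
    _ ≤ 2 * m ^ 2 * l ^ (2 * m - 1) := by gcongr
    _ ≤ 1 * (2 * (m : ℝ) ^ 2 * l ^ (2 * m - 1) + 2 * (m : ℝ) ^ 2 * l ^ (2 * m) + 1) := by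
        rw [one_mul]; linarith [show 0 ≤ 2 * (m : ℝ) ^ 2 * l ^ (2 * m) by positivity]
    _ ≤ _ := by gcongr; linarith

theorem stmt8_general (k m : ℕ) (hm : 1 ≤ m) (l : ℝ) (hl0 : 1 / 2 < l)
    (ε : ℝ) (hε : 0 < ε) :
    ∃ n₀ : ℕ, ∀ n : ℕ, n₀ ≤ n → ∀ M : ℤ, ∀ a : Fin n → Fin k → ℤ,
      (∀ i j, 0 ≤ a i j ∧ a i j ≤ M) →
      (∀ A₁ A₂ : Finset (Fin n), A₁ ∈ Fam n l → A₂ ∈ Fam n l → A₁ ≠ A₂ →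
        m ≤ A₁.card → m ≤ A₂.card → mthEvalVec n k m a A₁ ≠ mthEvalVec n k m a A₂) →
      (∑ A ∈ Fam n l, ∑ j, ((mthEvalVec n k m a A j : ℝ) -
          (∑ B ∈ Fam n l, (mthEvalVec n k m a B j : ℝ)) / ((Fam n l).card : ℝ)) ^ 2) /
        ((Fam n l).card : ℝ) ≤
      (1 + ε) * ((k : ℝ) * (2 * (m : ℝ) ^ 2 * l ^ (2 * m - 1) +
          2 * (m : ℝ) ^ 2 * l ^ (2 * m) + 1)) * (n : ℝ) ^ (2 * m - 1) *
        (M : ℝ) ^ (2 * m) / ((m.factorial : ℝ)) ^ 2 := by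
  refine ⟨2 * m ^ 2, fun n hn M a ha _ => ?_⟩
  set P : ℝ := (n : ℝ) ^ (2 * m - 1) * (M : ℝ) ^ (2 * m) / (m ! : ℝ) ^ 2 with hP
  have hN : (2 : ℝ) ^ n ≤ 2 * #(Fam n l) := by exact_mod_cast two_pow_le_two_mul_card_Fam hl0.le
  set N : ℝ := (#(Fam n l) : ℝ)
  have hP0 : 0 ≤ P := by have := (even_two_mul m).pow_nonneg (M : ℝ); positivity
  calc _ = (∑ j, ∑ A ∈ Fam n l, ((mthEvalVec n k m a A j : ℝ) -
          (∑ B ∈ Fam n l, (mthEvalVec n k m a B j : ℝ)) / N) ^ 2) / N := by rw [sum_comm]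
    _ ≤ (∑ _j : Fin k, 2 ^ n / 4 ^ m * (2 * m ^ 2 * P)) / N := by
        gcongr with j
        rw [hP, ← mul_div_assoc, ← mul_assoc]
        exact sum_sq_sub_mean_mthEvalVec_le ha hn _ j
    _ = k * (4 * m ^ 2 / 4 ^ m) * P * (2 ^ n / (2 * N)) := by
        rw [sum_const, Finset.card_univ, Fintype.card_fin, nsmul_eq_mul]; ring
    _ ≤ k * ((1 + ε) * (2 * (m : ℝ) ^ 2 * l ^ (2 * m - 1) + 2 * (m : ℝ) ^ 2 * l ^ (2 * m) + 1))
          * P * 1 := by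
        gcongr
        · exact four_mul_sq_div_four_pow_le hm hl0.le hε.le
        · exact div_le_one_of_le₀ hN (by positivity)
    _ = _ := by rw [hP]; ring

theorem stmt8 (k m : ℕ) (hk : 1 ≤ k) (hm : 1 ≤ m) (l : ℝ) (hl0 : 1 / 2 < l) (hl : l ≤ 1)
    (ε : ℝ) (hε : 0 < ε) :
    ∃ n₀ : ℕ, ∀ n : ℕ, n₀ ≤ n → ∀ M : ℤ, ∀ a : Fin n → Fin k → ℤ,
      (∀ i j, 0 ≤ a i j ∧ a i j ≤ M) →
      (∀ A₁ A₂ : Finset (Fin n), A₁ ∈ Fam n l → A₂ ∈ Fam n l → A₁ ≠ A₂ →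
        m ≤ A₁.card → m ≤ A₂.card → mthEvalVec n k m a A₁ ≠ mthEvalVec n k m a A₂) →
      (∑ A ∈ Fam n l, ∑ j, ((mthEvalVec n k m a A j : ℝ) -
          (∑ B ∈ Fam n l, (mthEvalVec n k m a B j : ℝ)) / ((Fam n l).card : ℝ)) ^ 2) /
        ((Fam n l).card : ℝ) ≤
      (1 + ε) * ((k : ℝ) * (2 * (m : ℝ) ^ 2 * l ^ (2 * m - 1) +
          2 * (m : ℝ) ^ 2 * l ^ (2 * m) + 1)) * (n : ℝ) ^ (2 * m - 1) *
        (M : ℝ) ^ (2 * m) / ((m.factorial : ℝ)) ^ 2 :=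
  stmt8_general k m hm l hl0 ε hε
end
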